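/- Let n be an even positive integer, F = 𝔽_{2^n}, R = W₂(F), and let f : F → F be a pseudo-planar function with f(0) = 0. Set b = 2^{(n−2)/2} and for each additive character χ of (R,+) with values in ℂ let W_f(χ) = ∑_{x ∈ F} χ(τ(x) + 2·τ(f(x)^{2^{n-1}})). Then, with i = √−1: the number of additive characters χ with W_f(χ) = 4b² is 1; with W_f(χ) = 0 is 4b² − 1; with W_f(χ) = 2b is b(4b³ + 4b² − b − 1); with W_f(χ) = −2b is b(4b³ − 4b² − b + 1); with W_f(χ) = 2b·i is b²(4b² − 1); and with W_f(χ) = −2b·i is b²(4b² − 1). -/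

import Mathlib

open scoped Classical

noncomputable section

/-- The Galois ring `GR(4,n)`, realized as length-2 2-typical truncated Witt vectors
over `F = 𝔽_{2^n}`. -/
abbrev GR (n : ℕ) : Type := TruncatedWittVector 2 2 (GaloisField 2 n)

/-- The truncated Teichmüller lift `τ : F → W₂(F)`. -/
def teich (n : ℕ) (x : GaloisField 2 n) : GR n :=
  WittVector.truncate 2 (WittVector.teichmuller 2 x)

/-- The lifted set `D_f = {τ(x) + 2·τ(f(x)^(2^(n-1))) : x ∈ F} ⊆ GR(4,n)`. -/
def Dset (n : ℕ) (f : GaloisField 2 n → GaloisField 2 n) : Set (GR n) :=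
  {g | ∃ x : GaloisField 2 n, g = teich n x + 2 * teich n (f x ^ 2 ^ (n - 1))}

/-- `S₁ = D_f \ {0}`. -/
def S1 (n : ℕ) (f : GaloisField 2 n → GaloisField 2 n) : Set (GR n) :=
  Dset n f \ {0}

/-- `S₂ = {−s : s ∈ S₁}`. -/
def S2 (n : ℕ) (f : GaloisField 2 n → GaloisField 2 n) : Set (GR n) :=
  (fun s => -s) '' S1 n f

/-- `S₃ = 2R \ {0}`. -/
def S3 (n : ℕ) : Set (GR n) :=
  {g | ∃ x : GR n, g = 2 * x} \ {0}

/-- `S₄`: the elements outside `S₀ ∪ S₁ ∪ S₂ ∪ S₃` appearing in the multiset `D_f²`. -/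
def S4 (n : ℕ) (f : GaloisField 2 n → GaloisField 2 n) : Set (GR n) :=
  {g | g ∉ ({0} : Set (GR n)) ∪ S1 n f ∪ S2 n f ∪ S3 n ∧
    ∃ x ∈ Dset n f, ∃ y ∈ Dset n f, g = x + y}

/-- `S₅`: the remaining elements. -/
def S5 (n : ℕ) (f : GaloisField 2 n → GaloisField 2 n) : Set (GR n) :=
  {g | g ∉ ({0} : Set (GR n)) ∪ S1 n f ∪ S2 n f ∪ S3 n ∪ S4 n f}

/-!
Write an element of `R = W₂(F)` in Witt coordinates `(u, v)`; in characteristic 2 addition reads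
`(u, v) + (u', v') = (u + u', v + v' + u u')`, so `τ(x) + 2τ(f(x)^(2^(n-1))) = (x, f x)` and
`W_f(χ) = ∑ₓ χ(x, f x)`. Let `ψ` be the restriction of `χ` to `2R = {(0, v)}`. If `ψ` is trivial,
`u ↦ χ(u, 0)` is a character of `F`, so `W_f(χ)` is `q = 2^n` for `χ = 0` and `0` otherwise. If `ψ`
is not trivial, substituting `x = y + ε` gives
`|W_f(χ)|² = ∑_ε χ(ε, 0) ∑_y ψ(f(y + ε) + f(y) + ε y)`, and pseudo-planarity kills every `ε ≠ 0`,
so `|W_f(χ)|² = q`. Since `4R = 0`, `W_f(χ)` is a Gaussian integer `a + b i` with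
`a² + b² = 4^(n/2)`, which forces `ab = 0` and hence `W_f(χ)⁴ = q²`.

The multiplicities follow from moments. Orthogonality gives `∑_χ W_f(χ) = ∑_χ W_f(χ)² = q²`,
because `(x, f x) = 0` and `(x, f x) + (y, f y) = 0` happen only at `x = y = 0`. On the characters
with `ψ ≠ 0`, `W_f³ = q · conj W_f`, and for `v⁴ = q²` the geometric sum `∑_{j<4} (W_f / v)^j` is `4`
at `W_f = v` and `0` otherwise.
-/

open Finset
open scoped ComplexConjugate

theorem Int.mul_eq_zero_of_sq_add_sq_eq_four_pow {a b : ℤ} {m : ℕ} (h : a ^ 2 + b ^ 2 = 4 ^ m) :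
    a * b = 0 := by
  induction m generalizing a b with
  | zero =>
    have h1 := sq_nonneg (a - b)
    have h2 := sq_nonneg (a + b)
    have : 2 * (a * b) ≤ 1 ∧ -(2 * (a * b)) ≤ 1 := by constructor <;> nlinarith
    omega
  | succ m ih =>
    have hsq (x : ℤ) : x ^ 2 % 4 = 0 ∧ Even x ∨ x ^ 2 % 4 = 1 := by
      rcases Int.even_or_odd x with ⟨k, rfl⟩ | hx
      · exact Or.inl ⟨by ring_nf; omega, ⟨k, rfl⟩⟩
      · exact Or.inr (Int.sq_mod_four_eq_one_of_odd hx)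
    have h4 : (a ^ 2 + b ^ 2) % 4 = 0 := by rw [h, pow_succ]; simp
    obtain ⟨⟨-, a', rfl⟩, ⟨-, b', rfl⟩⟩ : (a ^ 2 % 4 = 0 ∧ Even a) ∧ (b ^ 2 % 4 = 0 ∧ Even b) := by
      rcases hsq a with ha | ha <;> rcases hsq b with hb | hb <;> first | exact ⟨ha, hb⟩ | omega
    have : a' * b' = 0 :=
      ih (mul_left_cancel₀ four_ne_zero (by linear_combination h - pow_succ' (4 : ℤ) m))
    linear_combination 4 * this

theorem geom_sum_eq_ite_of_pow_eq_one {k : Type*} [Field k] {x : k} {N : ℕ} (hx : x ^ N = 1) :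
    ∑ i ∈ range N, x ^ i = if x = 1 then (N : k) else 0 := by
  split_ifs with h
  · simp [h]
  · rw [geom_sum_eq h, hx, sub_self, zero_div]

theorem natCast_mul_card_filter_eq_sum_moments {ι k : Type*} [Field k] (s : Finset ι) (W : ι → k)
    {N : ℕ} {v : k} (hv : v ≠ 0) (hW : ∀ i ∈ s, W i ^ N = v ^ N) :
    (N : k) * #{i ∈ s | W i = v} = ∑ j ∈ range N, (∑ i ∈ s, W i ^ j) / v ^ j := by
  simp_rw [sum_div, ← div_pow]
  rw [sum_comm, card_filter, Nat.cast_sum, mul_sum]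
  refine sum_congr rfl fun i hi => ?_
  rw [geom_sum_eq_ite_of_pow_eq_one (by rw [div_pow, hW i hi, div_self (pow_ne_zero _ hv)]),
    div_eq_one_iff_eq hv]
  split_ifs <;> simp

theorem Complex.exists_eq_int_add_int_mul_I_of_pow_four_eq_one {z : ℂ} (hz : z ^ 4 = 1) :
    ∃ a b : ℤ, z = a + b * I := by
  have h : (z - 1) * (z + 1) * (z - I) * (z + I) = 0 := by
    linear_combination hz - (z ^ 2 - 1) * I_sq
  rcases mul_eq_zero.1 h with h | h
  · rcases mul_eq_zero.1 h with h | h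
    · rcases mul_eq_zero.1 h with h | h
      · exact ⟨1, 0, by push_cast; linear_combination h⟩
      · exact ⟨-1, 0, by push_cast; linear_combination h⟩
    · exact ⟨0, 1, by push_cast; linear_combination h⟩
  · exact ⟨0, -1, by push_cast; linear_combination h⟩

namespace AddChar

variable {G : Type*} [AddCommGroup G]

theorem exists_sum_apply_eq_int_add_int_mul_I {X : Type*} [Fintype X] (hG : ∀ g : G, 4 • g = 0)
    (χ : AddChar G ℂ) (d : X → G) : ∃ a b : ℤ, ∑ x, χ (d x) = a + b * Complex.I := by
  refine sum_induction _ (fun z : ℂ => ∃ a b : ℤ, z = a + b * Complex.I) ?_ ⟨0, 0, by simp⟩ ?_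
  · rintro _ _ ⟨a, b, rfl⟩ ⟨a', b', rfl⟩
    exact ⟨a + a', b + b', by push_cast; ring⟩
  · intro x _
    apply Complex.exists_eq_int_add_int_mul_I_of_pow_four_eq_one
    rw [← map_nsmul_eq_pow, hG, map_zero_eq_one]

variable [Fintype G]

theorem sum_sum_apply_eq_card_mul {X : Type*} [Fintype X] (d : X → G) :
    ∑ χ : AddChar G ℂ, ∑ x, χ (d x) = Fintype.card G * #{x | d x = 0} := by
  rw [sum_comm]
  simp_rw [sum_apply_eq_ite]
  rw [sum_ite, sum_const_zero, add_zero, sum_const, nsmul_eq_mul, mul_comm]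

theorem card_filter_comp_eq_zero_mul_card {H : Type*} [AddCommGroup H] [Fintype H] (ι : H →+ G)
    (hι : Function.Injective ι) :
    #{χ : AddChar G ℂ | χ.compAddMonoidHom ι = 0} * Fintype.card H = Fintype.card G := by
  have h := sum_sum_apply_eq_card_mul ι
  have hker : #{h : H | ι h = 0} = 1 :=
    card_eq_one.2 ⟨0, by ext h; simp [map_eq_zero_iff ι hι]⟩
  simp_rw [← compAddMonoidHom_apply, sum_eq_ite, sum_ite, sum_const_zero, add_zero, sum_const,
    nsmul_eq_mul, hker, Nat.cast_one, mul_one] at h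
  exact_mod_cast h

end AddChar

namespace WittVector

open MvPolynomial

theorem wittAdd_one_two : (wittAdd 2 1 : MvPolynomial (Fin 2 × ℕ) ℤ) =
    X (0, 1) + X (1, 1) - X (0, 0) * X (1, 0) := by
  have h := wittStructureInt_prop 2 (X 0 + X 1 : MvPolynomial (Fin 2) ℤ) 1
  simp only [wittPolynomial_one, map_add, map_mul, map_pow, bind₁_X_right,
    rename_X, Nat.cast_ofNat, map_ofNat] at h
  change 2 * wittAdd 2 1 + wittAdd 2 0 ^ 2 = _ at h
  rw [wittAdd_zero] at h
  have h2 : (2 : MvPolynomial (Fin 2 × ℕ) ℤ) *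
      (wittAdd 2 1 - (X (0, 1) + X (1, 1) - X (0, 0) * X (1, 0))) = 0 := by
    linear_combination h
  simpa [sub_eq_zero] using h2

theorem add_coeff_one_two {R : Type*} [CommRing R] (x y : WittVector 2 R) :
    (x + y).coeff 1 = x.coeff 1 + y.coeff 1 - x.coeff 0 * y.coeff 0 := by
  simp [add_coeff, wittAdd_one_two, peval, Function.uncurry]

end WittVector

namespace TruncatedWittVector

section Coordinates

variable {K : Type*}

def mk₂ (u v : K) : TruncatedWittVector 2 2 K := mk 2 ![u, v]

@[simp] theorem coeff_mk₂_zero (u v : K) : (mk₂ u v).coeff 0 = u := rfl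

@[simp] theorem coeff_mk₂_one (u v : K) : (mk₂ u v).coeff 1 = v := rfl

theorem eq_mk₂ (x : TruncatedWittVector 2 2 K) : x = mk₂ (x.coeff 0) (x.coeff 1) := by
  ext i; fin_cases i <;> rfl

theorem mk₂_inj {u v u' v' : K} : mk₂ u v = mk₂ u' v' ↔ u = u' ∧ v = v' := by
  refine ⟨fun h => ⟨congrArg (coeff 0) h, congrArg (coeff 1) h⟩, ?_⟩
  rintro ⟨rfl, rfl⟩; rfl

end Coordinates

variable {K : Type*} [CommRing K]

@[simp] theorem mk₂_zero : mk₂ (0 : K) 0 = 0 := by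
  rw [eq_mk₂ 0, coeff_zero, coeff_zero]

theorem mk₂_eq_zero {u v : K} : mk₂ u v = 0 ↔ u = 0 ∧ v = 0 := by
  rw [← mk₂_zero, mk₂_inj]

theorem truncate_eq_mk₂ (x : WittVector 2 K) :
    WittVector.truncate 2 x = mk₂ (x.coeff 0) (x.coeff 1) := by
  ext i; fin_cases i <;> simp [mk₂]

theorem truncate_teichmuller (x : K) :
    WittVector.truncate 2 (WittVector.teichmuller 2 x) = mk₂ x 0 := by
  rw [truncate_eq_mk₂, WittVector.teichmuller_coeff_zero,
    WittVector.teichmuller_coeff_pos 2 x 1 one_pos]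

theorem exists_truncate_eq_mk₂ (u v : K) :
    ∃ x : WittVector 2 K, x.coeff 0 = u ∧ x.coeff 1 = v ∧ WittVector.truncate 2 x = mk₂ u v := by
  obtain ⟨x, hx⟩ := WittVector.truncate_surjective (p := 2) 2 K (mk₂ u v)
  obtain ⟨hu, hv⟩ := mk₂_inj.1 ((truncate_eq_mk₂ x).symm.trans hx)
  exact ⟨x, hu, hv, hx⟩

theorem mk₂_add_mk₂ (u v u' v' : K) :
    mk₂ u v + mk₂ u' v' = mk₂ (u + u') (v + v' - u * u') := by
  obtain ⟨x, rfl, rfl, hx⟩ := exists_truncate_eq_mk₂ u v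
  obtain ⟨y, rfl, rfl, hy⟩ := exists_truncate_eq_mk₂ u' v'
  rw [← hx, ← hy, ← map_add, truncate_eq_mk₂, WittVector.add_coeff_zero,
    WittVector.add_coeff_one_two]

def verschiebung₂ : K →+ TruncatedWittVector 2 2 K where
  toFun := mk₂ 0
  map_zero' := mk₂_zero
  map_add' v v' := by rw [mk₂_add_mk₂]; simp

theorem verschiebung₂_apply (v : K) : verschiebung₂ v = mk₂ 0 v := rfl

theorem verschiebung₂_injective : Function.Injective (verschiebung₂ : K →+ _) :=
  fun _ _ h => (mk₂_inj.1 h).2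

theorem mk₂_eq_mk₂_add_verschiebung₂ (u v : K) : mk₂ u v = mk₂ u 0 + verschiebung₂ v := by
  rw [verschiebung₂_apply, mk₂_add_mk₂]; simp

section CharTwo

variable [CharP K 2]

theorem mk₂_add_mk₂_of_charTwo (u v u' v' : K) :
    mk₂ u v + mk₂ u' v' = mk₂ (u + u') (v + v' + u * u') := by
  rw [mk₂_add_mk₂, CharTwo.sub_eq_add]

theorem mk₂_add_eq_add_mk₂ (y ε v w : K) :
    mk₂ (y + ε) w = mk₂ y v + mk₂ ε (w + v + ε * y) := by
  rw [mk₂_add_mk₂_of_charTwo, mk₂_inj]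
  refine ⟨rfl, ?_⟩
  linear_combination -CharTwo.add_self_eq_zero v - CharTwo.add_self_eq_zero (ε * y)

theorem two_mul_mk₂ (u v : K) : 2 * mk₂ u v = mk₂ 0 (u * u) := by
  rw [two_mul, mk₂_add_mk₂_of_charTwo, CharTwo.add_self_eq_zero, CharTwo.add_self_eq_zero,
    zero_add]

theorem four_nsmul_eq_zero (x : TruncatedWittVector 2 2 K) : 4 • x = 0 := by
  rw [nsmul_eq_mul, show ((4 : ℕ) : TruncatedWittVector 2 2 K) = 2 * 2 by norm_num, mul_assoc,
    eq_mk₂ x, two_mul_mk₂, two_mul_mk₂, mul_zero, mk₂_zero]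

end CharTwo

end TruncatedWittVector

open TruncatedWittVector

def IsPseudoPlanar {K : Type*} [CommRing K] (f : K → K) : Prop :=
  ∀ ε : K, ε ≠ 0 → Function.Bijective fun x => f (x + ε) + f x + ε * x

theorem IsPseudoPlanar.sum_apply_eq_ite {K : Type*} [CommRing K] [Fintype K] [CharP K 2]
    {f : K → K} (hpp : IsPseudoPlanar f) {ψ : AddChar K ℂ} (hψ : ψ ≠ 0) (ε : K) :
    ∑ y, ψ (f (y + ε) + f y + ε * y) = if ε = 0 then (Fintype.card K : ℂ) else 0 := by
  split_ifs with hε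
  · simp [hε, CharTwo.add_self_eq_zero]
  · rw [Fintype.sum_bijective _ (hpp ε hε) _ ψ fun _ => rfl]
    exact AddChar.sum_eq_zero_iff_ne_zero.2 hψ

section CharSum

variable {K : Type*} [CommRing K] [Fintype K]

local notation "𝕎₂" => TruncatedWittVector 2 2 K

/-- The paper's `W_f(χ)`, with `τ(x) + 2τ(f(x)^(2^(n-1)))` written as `mk₂ x (f x)`. -/
def witt₂CharSum (f : K → K) (χ : AddChar 𝕎₂ ℂ) : ℂ := ∑ x, χ (mk₂ x (f x))

variable (f : K → K)

theorem witt₂CharSum_zero : witt₂CharSum f 0 = Fintype.card K := by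
  simp [witt₂CharSum]

theorem witt₂CharSum_eq_zero {χ : AddChar 𝕎₂ ℂ} (hχ : χ ≠ 0)
    (hV : χ.compAddMonoidHom verschiebung₂ = 0) : witt₂CharSum f χ = 0 := by
  have hχV (u v : K) : χ (mk₂ u v) = χ (mk₂ u 0) := by
    rw [mk₂_eq_mk₂_add_verschiebung₂, AddChar.map_add_eq_mul, ← AddChar.compAddMonoidHom_apply, hV,
      AddChar.zero_apply, mul_one]
  let φ : AddChar K ℂ :=
    { toFun := fun u => χ (mk₂ u 0)
      map_zero_eq_one' := by simp
      map_add_eq_mul' := fun u u' => by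
        rw [← AddChar.map_add_eq_mul, mk₂_add_mk₂]
        exact (hχV _ _).symm }
  have hφ : φ ≠ 0 := by
    refine fun h => hχ ?_
    ext x
    rw [eq_mk₂ x, hχV]
    exact DFunLike.congr_fun h (x.coeff 0)
  rw [witt₂CharSum]
  simp_rw [hχV]
  exact AddChar.sum_eq_zero_iff_ne_zero.2 hφ

theorem filter_witt₂CharSum_eq {v : ℂ} (hv0 : v ≠ 0) (hvq : v ≠ Fintype.card K) :
    ({χ | witt₂CharSum f χ = v} : Finset (AddChar 𝕎₂ ℂ)) =
      {χ ∈ ({χ : AddChar 𝕎₂ ℂ | χ.compAddMonoidHom verschiebung₂ ≠ 0} : Finset _) | witt₂CharSum f χ = v} := by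
  ext χ
  simp only [mem_filter, mem_univ, true_and, iff_and_self]
  intro hW hV
  by_cases hχ : χ = 0
  · exact hvq (hW ▸ hχ ▸ witt₂CharSum_zero f)
  · exact hv0 (hW ▸ witt₂CharSum_eq_zero f hχ hV)

theorem card_filter_comp_verschiebung₂_eq_zero :
    #{χ : AddChar 𝕎₂ ℂ | χ.compAddMonoidHom verschiebung₂ = 0} = Fintype.card K := by
  have h := AddChar.card_filter_comp_eq_zero_mul_card _ (verschiebung₂_injective (K := K))
  rw [TruncatedWittVector.card, sq] at h
  exact Nat.eq_of_mul_eq_mul_right Fintype.card_pos h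

theorem card_filter_comp_verschiebung₂_ne_zero :
    #{χ : AddChar 𝕎₂ ℂ | χ.compAddMonoidHom verschiebung₂ ≠ 0} =
      Fintype.card K ^ 2 - Fintype.card K := by
  have h := card_filter_add_card_filter_not (s := univ)
    fun χ : AddChar 𝕎₂ ℂ => χ.compAddMonoidHom verschiebung₂ = 0
  rw [card_filter_comp_verschiebung₂_eq_zero, card_univ, AddChar.card_eq,
    TruncatedWittVector.card] at h
  exact Nat.eq_sub_of_add_eq' h

theorem sum_witt₂CharSum (hf0 : f 0 = 0) : ∑ χ, witt₂CharSum f χ = Fintype.card K ^ 2 := by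
  have hzero : #{x | mk₂ x (f x) = 0} = 1 :=
    card_eq_one.2 ⟨0, by ext x; simp +contextual [mk₂_eq_zero, hf0]⟩
  simp_rw [witt₂CharSum]
  rw [AddChar.sum_sum_apply_eq_card_mul, TruncatedWittVector.card, hzero]
  simp

theorem sum_filter_witt₂CharSum_pow {j : ℕ} (hj : j ≠ 0) :
    ∑ χ with χ.compAddMonoidHom verschiebung₂ ≠ 0, witt₂CharSum f χ ^ j =
      ∑ χ, witt₂CharSum f χ ^ j - (Fintype.card K : ℂ) ^ j := by
  have htrivial : ∑ χ with ¬χ.compAddMonoidHom verschiebung₂ ≠ 0, witt₂CharSum f χ ^ j =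
      (Fintype.card K : ℂ) ^ j := by
    rw [sum_eq_single_of_mem 0 (by simp [AddChar.ext_iff]), witt₂CharSum_zero]
    intro χ hχ hχ0
    rw [mem_filter, not_not] at hχ
    rw [witt₂CharSum_eq_zero f hχ0 hχ.2, zero_pow hj]
  rw [← sum_filter_add_sum_filter_not univ fun χ => χ.compAddMonoidHom verschiebung₂ ≠ 0,
    htrivial, add_sub_cancel_right]

theorem sum_filter_witt₂CharSum (hf0 : f 0 = 0) :
    ∑ χ with χ.compAddMonoidHom verschiebung₂ ≠ 0, witt₂CharSum f χ =
      (Fintype.card K : ℂ) ^ 2 - Fintype.card K := by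
  simpa only [pow_one, sum_witt₂CharSum f hf0] using sum_filter_witt₂CharSum_pow f one_ne_zero

section CharTwo

variable [CharP K 2]

theorem sum_witt₂CharSum_sq [NoZeroDivisors K] (hf0 : f 0 = 0) :
    ∑ χ, witt₂CharSum f χ ^ 2 = Fintype.card K ^ 2 := by
  have hzero : #{p : K × K | mk₂ p.1 (f p.1) + mk₂ p.2 (f p.2) = 0} = 1 := by
    refine card_eq_one.2 ⟨(0, 0), ?_⟩
    ext ⟨x, y⟩
    simp only [mem_filter, mem_univ, true_and, mem_singleton, mk₂_add_mk₂_of_charTwo, mk₂_eq_zero,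
      Prod.mk.injEq]
    constructor
    · rintro ⟨hxy, hf⟩
      obtain rfl := CharTwo.add_eq_zero.1 hxy
      rw [CharTwo.add_self_eq_zero, zero_add, mul_self_eq_zero] at hf
      exact ⟨hf, hf⟩
    · rintro ⟨rfl, rfl⟩
      simp [hf0]
  have hsq (χ : AddChar 𝕎₂ ℂ) :
      witt₂CharSum f χ ^ 2 = ∑ p : K × K, χ (mk₂ p.1 (f p.1) + mk₂ p.2 (f p.2)) := by
    rw [witt₂CharSum, sq, sum_mul_sum, ← Fintype.sum_prod_type']
    simp_rw [AddChar.map_add_eq_mul]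
  simp_rw [hsq]
  rw [AddChar.sum_sum_apply_eq_card_mul, TruncatedWittVector.card, hzero]
  simp

theorem sum_filter_witt₂CharSum_sq [NoZeroDivisors K] (hf0 : f 0 = 0) :
    ∑ χ with χ.compAddMonoidHom verschiebung₂ ≠ 0, witt₂CharSum f χ ^ 2 = 0 := by
  rw [sum_filter_witt₂CharSum_pow f two_ne_zero, sum_witt₂CharSum_sq f hf0]
  ring

theorem witt₂CharSum_mul_conj (hpp : IsPseudoPlanar f) {χ : AddChar 𝕎₂ ℂ}
    (hV : χ.compAddMonoidHom verschiebung₂ ≠ 0) :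
    witt₂CharSum f χ * conj (witt₂CharSum f χ) = Fintype.card K := by
  set ψ := χ.compAddMonoidHom verschiebung₂
  calc witt₂CharSum f χ * conj (witt₂CharSum f χ)
      = ∑ y, ∑ ε, χ (mk₂ (y + ε) (f (y + ε))) * conj (χ (mk₂ y (f y))) := by
        rw [witt₂CharSum, map_sum, sum_mul_sum, sum_comm]
        exact sum_congr rfl fun y _ => (Fintype.sum_equiv (Equiv.addLeft y) _ _ fun _ => rfl).symm
    _ = ∑ ε, χ (mk₂ ε 0) * ∑ y, ψ (f (y + ε) + f y + ε * y) := by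
        have hshift (y ε : K) : χ (mk₂ (y + ε) (f (y + ε))) * conj (χ (mk₂ y (f y))) =
            χ (mk₂ ε 0) * ψ (f (y + ε) + f y + ε * y) := by
          rw [mk₂_add_eq_add_mk₂ y ε (f y), ← AddChar.map_neg_eq_conj, ← AddChar.map_add_eq_mul,
            add_neg_cancel_comm, mk₂_eq_mk₂_add_verschiebung₂, AddChar.map_add_eq_mul]
          rfl
        simp_rw [hshift, mul_sum]
        exact sum_comm
    _ = Fintype.card K := by
        simp_rw [hpp.sum_apply_eq_ite hV, mul_ite, mul_zero]
        simp

theorem witt₂CharSum_pow_four (hpp : IsPseudoPlanar f) {m : ℕ} (hq : Fintype.card K = 4 ^ m)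
    {χ : AddChar 𝕎₂ ℂ} (hV : χ.compAddMonoidHom verschiebung₂ ≠ 0) :
    witt₂CharSum f χ ^ 4 = (Fintype.card K : ℂ) ^ 2 := by
  have hnorm := witt₂CharSum_mul_conj f hpp hV
  obtain ⟨a, b, hab⟩ :=
    AddChar.exists_sum_apply_eq_int_add_int_mul_I four_nsmul_eq_zero χ fun x => mk₂ x (f x)
  rw [witt₂CharSum, hab, map_add, map_mul, map_intCast, map_intCast, Complex.conj_I] at hnorm
  have hsq : (a : ℂ) ^ 2 + (b : ℂ) ^ 2 = Fintype.card K := by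
    linear_combination hnorm + (b : ℂ) ^ 2 * Complex.I_sq
  have hab0 : (a : ℂ) * b = 0 := by
    have h : a ^ 2 + b ^ 2 = 4 ^ m := by exact_mod_cast hq ▸ hsq
    exact_mod_cast Int.mul_eq_zero_of_sq_add_sq_eq_four_pow h
  rw [witt₂CharSum, hab, ← hsq]
  linear_combination (-8 * a * b + 4 * (a ^ 2 - b ^ 2) * Complex.I) * hab0 +
    (6 * a ^ 2 * b ^ 2 + 4 * a * b ^ 3 * Complex.I + b ^ 4 * (Complex.I ^ 2 - 1)) * Complex.I_sq

theorem witt₂CharSum_pow_three (hpp : IsPseudoPlanar f) {m : ℕ} (hq : Fintype.card K = 4 ^ m)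
    {χ : AddChar 𝕎₂ ℂ} (hV : χ.compAddMonoidHom verschiebung₂ ≠ 0) :
    witt₂CharSum f χ ^ 3 = Fintype.card K * conj (witt₂CharSum f χ) := by
  have hq0 : (Fintype.card K : ℂ) ≠ 0 := Nat.cast_ne_zero.2 Fintype.card_ne_zero
  refine mul_right_cancel₀ hq0 ?_
  linear_combination conj (witt₂CharSum f χ) * witt₂CharSum_pow_four f hpp hq hV -
    witt₂CharSum f χ ^ 3 * witt₂CharSum_mul_conj f hpp hV

theorem sum_filter_witt₂CharSum_pow_three (hpp : IsPseudoPlanar f) (hf0 : f 0 = 0) {m : ℕ}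
    (hq : Fintype.card K = 4 ^ m) :
    ∑ χ with χ.compAddMonoidHom verschiebung₂ ≠ 0, witt₂CharSum f χ ^ 3 =
      Fintype.card K * ((Fintype.card K : ℂ) ^ 2 - Fintype.card K) := by
  rw [sum_congr rfl fun χ hχ => witt₂CharSum_pow_three f hpp hq (mem_filter.1 hχ).2, ← mul_sum,
    ← map_sum, sum_filter_witt₂CharSum f hf0]
  simp

end CharTwo

end CharSum

section Spectrum

variable {K : Type*} [Field K] [Fintype K] [CharP K 2] (f : K → K)

local notation "𝕎₂" => TruncatedWittVector 2 2 K

theorem witt₂CharSum_ne_card (hpp : IsPseudoPlanar f) {χ : AddChar 𝕎₂ ℂ} (hχ : χ ≠ 0) :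
    witt₂CharSum f χ ≠ Fintype.card K := by
  have hq : (Fintype.card K : ℂ) ≠ 0 := Nat.cast_ne_zero.2 Fintype.card_ne_zero
  have hq1 : (Fintype.card K : ℂ) ≠ 1 := Nat.cast_ne_one.2 Fintype.one_lt_card.ne'
  intro hW
  by_cases hV : χ.compAddMonoidHom verschiebung₂ = 0
  · exact hq (hW ▸ witt₂CharSum_eq_zero f hχ hV)
  · have h := witt₂CharSum_mul_conj f hpp hV
    rw [hW, Complex.conj_natCast] at h
    exact hq1 (mul_left_cancel₀ hq (by rw [h, mul_one]))

theorem card_filter_witt₂CharSum_eq_card (hpp : IsPseudoPlanar f) :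
    #{χ : AddChar 𝕎₂ ℂ | witt₂CharSum f χ = Fintype.card K} = 1 := by
  refine card_eq_one.2 ⟨0, ?_⟩
  ext χ
  simp only [mem_filter, mem_univ, true_and, mem_singleton]
  refine ⟨fun hW => ?_, fun h => h ▸ witt₂CharSum_zero f⟩
  by_contra hχ
  exact witt₂CharSum_ne_card f hpp hχ hW

theorem card_filter_witt₂CharSum_eq_zero (hpp : IsPseudoPlanar f) :
    #{χ : AddChar 𝕎₂ ℂ | witt₂CharSum f χ = 0} = Fintype.card K - 1 := by
  have hq : (Fintype.card K : ℂ) ≠ 0 := Nat.cast_ne_zero.2 Fintype.card_ne_zero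
  have h : ({χ | witt₂CharSum f χ = 0} : Finset (AddChar 𝕎₂ ℂ)) =
      ({χ | χ.compAddMonoidHom verschiebung₂ = 0} : Finset (AddChar 𝕎₂ ℂ)).erase 0 := by
    ext χ
    simp only [mem_filter, mem_univ, true_and, mem_erase]
    constructor
    · intro hW
      refine ⟨fun hχ => hq ?_, by_contra fun hV => hq ?_⟩
      · rw [← hW, hχ, witt₂CharSum_zero]
      · rw [← witt₂CharSum_mul_conj f hpp hV, hW, zero_mul]
    · exact fun ⟨hχ, hV⟩ => witt₂CharSum_eq_zero f hχ hV
  rw [h, card_erase_of_mem (by simp [AddChar.ext_iff]), card_filter_comp_verschiebung₂_eq_zero]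

theorem four_mul_card_filter_witt₂CharSum_eq (hpp : IsPseudoPlanar f) (hf0 : f 0 = 0) {m : ℕ}
    (hq : Fintype.card K = 4 ^ m) {v : ℂ} (hv : v ^ 4 = (Fintype.card K : ℂ) ^ 2) :
    4 * (#{χ : AddChar 𝕎₂ ℂ | witt₂CharSum f χ = v} : ℂ) =
      ((Fintype.card K : ℂ) ^ 2 - Fintype.card K) * (1 + 1 / v + v / Fintype.card K) := by
  have hq0 : (Fintype.card K : ℂ) ≠ 0 := Nat.cast_ne_zero.2 Fintype.card_ne_zero
  have hv0 : v ≠ 0 := by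
    rintro rfl
    exact hq0 (pow_eq_zero_iff two_ne_zero |>.1 (by rw [← hv]; norm_num))
  have hvq : v ≠ Fintype.card K := by
    rintro rfl
    have h : Fintype.card K ^ 4 = Fintype.card K ^ 2 := by exact_mod_cast hv
    exact absurd (Nat.pow_right_injective Fintype.one_lt_card h) (by norm_num)
  have h := natCast_mul_card_filter_eq_sum_moments {χ | χ.compAddMonoidHom verschiebung₂ ≠ 0}
    (witt₂CharSum f) hv0 (N := 4)
    fun χ hχ => (witt₂CharSum_pow_four f hpp hq (mem_filter.1 hχ).2).trans hv.symm
  simp only [Nat.cast_ofNat, sum_range_succ, sum_range_zero, pow_zero, sum_const, nsmul_eq_mul,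
    mul_one, pow_one, card_filter_comp_verschiebung₂_ne_zero, sum_filter_witt₂CharSum f hf0,
    sum_filter_witt₂CharSum_sq f hf0, sum_filter_witt₂CharSum_pow_three f hpp hf0 hq] at h
  rw [filter_witt₂CharSum_eq f hv0 hvq, h, Nat.cast_sub (Nat.le_self_pow two_ne_zero _)]
  push_cast
  field_simp
  linear_combination (1 - Fintype.card K : ℂ) * hv

end Spectrum

theorem teich_add_two_mul_teich_pow {n : ℕ} [Fintype (GaloisField 2 n)] (hn : 0 < n)
    (x y : GaloisField 2 n) : teich n x + 2 * teich n (y ^ 2 ^ (n - 1)) = mk₂ x y := by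
  have hsqrt : y ^ 2 ^ (n - 1) * y ^ 2 ^ (n - 1) = y := by
    have hcard : Fintype.card (GaloisField 2 n) = 2 ^ n :=
      Nat.card_eq_fintype_card.symm.trans (GaloisField.card 2 n hn.ne')
    rw [← pow_add, ← two_mul, ← pow_succ', Nat.sub_add_cancel hn, ← hcard, FiniteField.pow_card]
  rw [teich, teich, truncate_teichmuller, truncate_teichmuller, two_mul_mk₂, hsqrt,
    ← verschiebung₂_apply, ← mk₂_eq_mk₂_add_verschiebung₂]

open Complex in
/-- **Corollary (Fourier spectrum, `n` even).** Let `n` be even and positive, `f`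
pseudo-planar on `F = 𝔽_{2^n}` with `f(0) = 0`, `b = 2^((n−2)/2)`, and for each additive
character `χ : (R,+) → ℂ` of the Galois ring `R = W₂(F)` let
`W_f(χ) = ∑_x χ(τ(x) + 2τ(f(x)^(2^(n−1))))`. Then the value `4b²` occurs once, `0` occurs
`4b² − 1` times, `2b` occurs `b(4b³+4b²−b−1)` times, `−2b` occurs `b(4b³−4b²−b+1)` times,
and each of `±2b·i` occurs `b²(4b²−1)` times. -/
theorem fourier_spectrum_even
    (n : ℕ) (hn : 0 < n) (heven : Even n)
    (f : GaloisField 2 n → GaloisField 2 n)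
    (hpp : ∀ ε : GaloisField 2 n, ε ≠ 0 →
      Function.Bijective (fun x => f (x + ε) + f x + ε * x))
    (hf0 : f 0 = 0)
    (b : ℕ) (hb : b = 2 ^ ((n - 2) / 2))
    (W : AddChar (GR n) ℂ → ℂ)
    (hW : ∀ χ : AddChar (GR n) ℂ,
      W χ = ∑ᶠ x : GaloisField 2 n, χ (teich n x + 2 * teich n (f x ^ 2 ^ (n - 1)))) :
    Nat.card {χ : AddChar (GR n) ℂ // W χ = 4 * (b : ℂ) ^ 2} = 1 ∧
    (Nat.card {χ : AddChar (GR n) ℂ // W χ = 0} : ℚ) = 4 * (b : ℚ) ^ 2 - 1 ∧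
    (Nat.card {χ : AddChar (GR n) ℂ // W χ = 2 * (b : ℂ)} : ℚ) =
      (b : ℚ) * (4 * (b : ℚ) ^ 3 + 4 * (b : ℚ) ^ 2 - (b : ℚ) - 1) ∧
    (Nat.card {χ : AddChar (GR n) ℂ // W χ = -(2 * (b : ℂ))} : ℚ) =
      (b : ℚ) * (4 * (b : ℚ) ^ 3 - 4 * (b : ℚ) ^ 2 - (b : ℚ) + 1) ∧
    (Nat.card {χ : AddChar (GR n) ℂ // W χ = 2 * (b : ℂ) * I} : ℚ) =
      (b : ℚ) ^ 2 * (4 * (b : ℚ) ^ 2 - 1) ∧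
    (Nat.card {χ : AddChar (GR n) ℂ // W χ = -(2 * (b : ℂ) * I)} : ℚ) =
      (b : ℚ) ^ 2 * (4 * (b : ℚ) ^ 2 - 1) := by
  let _ : Fintype (GaloisField 2 n) := Fintype.ofFinite _
  obtain rfl : W = witt₂CharSum f := funext fun χ => by
    simp_rw [hW, finsum_eq_sum_of_fintype, teich_add_two_mul_teich_pow hn, witt₂CharSum]
  obtain ⟨k, rfl⟩ : ∃ k, n = 2 * (k + 1) := by
    obtain ⟨m, rfl⟩ := heven
    exact ⟨m - 1, by omega⟩
  have hcard : Fintype.card (GaloisField 2 (2 * (k + 1))) = 2 ^ (2 * (k + 1)) := by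
    rw [← Nat.card_eq_fintype_card, GaloisField.card 2 _ hn.ne']
  have hq : Fintype.card (GaloisField 2 (2 * (k + 1))) = 4 ^ (k + 1) := by
    rw [hcard, pow_mul]; norm_num
  have hqb : Fintype.card (GaloisField 2 (2 * (k + 1))) = 4 * b ^ 2 := by
    rw [hcard, hb, show (2 * (k + 1) - 2) / 2 = k by omega]; ring
  have hb0 : (b : ℂ) ≠ 0 := Nat.cast_ne_zero.2 (by rw [hb]; positivity)
  have hqbC : (Fintype.card (GaloisField 2 (2 * (k + 1))) : ℂ) = 4 * (b : ℂ) ^ 2 := by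
    exact_mod_cast hqb
  have hcount (v : ℂ) (N : ℚ) (hv : v ^ 4 = (4 * (b : ℂ) ^ 2) ^ 2)
      (hN : 4 * (N : ℂ) = ((4 * (b : ℂ) ^ 2) ^ 2 - 4 * b ^ 2) * (1 + 1 / v + v / (4 * b ^ 2))) :
      (#{χ | witt₂CharSum f χ = v} : ℚ) = N := by
    have h := four_mul_card_filter_witt₂CharSum_eq f hpp hf0 hq (hqbC ▸ hv)
    rw [hqbC, ← hN] at h
    exact_mod_cast mul_left_cancel₀ (by norm_num) h
  simp only [Nat.card_eq_fintype_card, Fintype.card_subtype]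
  refine ⟨?_, ?_, hcount _ _ (by ring) ?_, hcount _ _ (by ring) ?_,
    hcount _ _ (by linear_combination (16 * (b : ℂ) ^ 4 * (I ^ 2 - 1)) * I_sq) ?_,
    hcount _ _ (by linear_combination (16 * (b : ℂ) ^ 4 * (I ^ 2 - 1)) * I_sq) ?_⟩
  · rw [← hqbC]
    exact card_filter_witt₂CharSum_eq_card f hpp
  · rw [card_filter_witt₂CharSum_eq_zero f hpp, Nat.cast_sub Fintype.card_pos, hqb]
    push_cast; ring
  all_goals push_cast; field_simp
  · ring
  · ring
  · linear_combination -4 * (4 * (b : ℂ) ^ 2 - 1) * I_sq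
  · linear_combination 4 * (4 * (b : ℂ) ^ 2 - 1) * I_sq
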